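/- arXiv:1404.0421 — 6 statements merged into one kernel-verified Lean document; each statement's English description precedes it below -/
import Mathlib

section
/- For the discrete interval I_a(k) with k ≥ n+1, the dimension on scale a with control na is exactly 1: there exist two a-disjoint na-uniformly bounded families covering I_a(k), but no single a-disjoint na-uniformly bounded family covers I_a(k). -/
/-!
Colouring the points `j * a` of `I_a(k)` by the parity of `j` gives two families of singletons
whose distinct members are at distance `≥ 2a > a`. Conversely, consecutive points are at
distance `a`, so a single `a`-disjoint family must put all of `I_a(k)` into one member, whose
diameter `k * a` exceeds `n * a`.
-/

open Metric Set Filter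

noncomputable section

/-- Distance between two subsets of a metric space, valued in `ℝ≥0∞`
(it is `⊤` when one of the sets is empty, matching the convention `inf ∅ = ∞`). -/
def setEDist {X : Type*} [PseudoMetricSpace X] (A B : Set X) : ENNReal :=
  ⨅ a ∈ A, EMetric.infEdist a B

/-- `diLE X lam D n` : the dimension of `X` on the scale `lam` with control `D`
does not exceed `n`, i.e. `X` is covered by `n+1` families of subsets, each family
`lam`-disjoint (distinct members at distance `> lam`) and `D`-uniformly bounded. -/
def diLE (X : Type*) [PseudoMetricSpace X] (lam D : ℝ) (n : ℕ) : Prop :=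
  ∃ U : Fin (n + 1) → Set (Set X),
    (∀ i, ∀ A ∈ U i, ∀ B ∈ U i, A ≠ B → ENNReal.ofReal lam < setEDist A B) ∧
    (∀ i, ∀ A ∈ U i, EMetric.diam A ≤ ENNReal.ofReal D) ∧
    (∀ x : X, ∃ i, ∃ A ∈ U i, x ∈ A)

/-- `lasStarLE X n` : the asymptotic dimension of `X` with linear control is at most `n`. -/
def lasStarLE (X : Type*) [PseudoMetricSpace X] (n : ℕ) : Prop :=
  ∃ c : ℝ, 0 < c ∧ ∀ R : ℝ, ∃ lam : ℝ, R < lam ∧ diLE X lam (c * lam) n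

/-- `ANasLE X n` : the asymptotic Assouad–Nagata dimension of `X` is at most `n`. -/
def ANasLE (X : Type*) [PseudoMetricSpace X] (n : ℕ) : Prop :=
  ∃ c : ℝ, 0 < c ∧ ∃ r₀ : ℝ, ∀ lam : ℝ, r₀ < lam → diLE X lam (c * lam) n

section SetEDist

variable {X : Type*} [PseudoMetricSpace X]

lemma setEDist_le_edist {A B : Set X} {x y : X} (hx : x ∈ A) (hy : y ∈ B) :
    setEDist A B ≤ edist x y :=
  (iInf₂_le x hx).trans (infEDist_le_edist_of_mem hy)

lemma setEDist_singleton (x y : X) : setEDist {x} {y} = edist x y := by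
  simp only [setEDist, mem_singleton_iff, iInf_iInf_eq_left]
  exact infEDist_singleton

end SetEDist

section DiLE

variable {X : Type*} [PseudoMetricSpace X]

theorem diLE_of_coloring {lam : ℝ} (D : ℝ) {n : ℕ} (c : X → Fin (n + 1))
    (hc : ∀ x y, c x = c y → x ≠ y → ENNReal.ofReal lam < edist x y) : diLE X lam D n := by
  refine ⟨fun i => (fun x => {x}) '' (c ⁻¹' {i}), ?_, ?_, ?_⟩
  · rintro i _ ⟨x, hx, rfl⟩ _ ⟨y, hy, rfl⟩ hne
    rw [setEDist_singleton]
    exact hc x y (hx.trans hy.symm) (by rintro rfl; exact hne rfl)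
  · rintro i _ ⟨x, -, rfl⟩
    exact ediam_singleton.trans_le zero_le
  · exact fun x => ⟨c x, {x}, ⟨x, rfl, rfl⟩, rfl⟩

theorem edist_le_of_diLE_zero {lam D : ℝ} (h : diLE X lam D 0) {p : ℕ → X} {m : ℕ}
    (hp : ∀ i < m, edist (p i) (p (i + 1)) ≤ ENNReal.ofReal lam) :
    edist (p 0) (p m) ≤ ENNReal.ofReal D := by
  obtain ⟨U, hdisj, hdiam, hcov⟩ := h
  have hcov₀ : ∀ x, ∃ A ∈ U 0, x ∈ A := fun x => by
    obtain ⟨i, A, hA, hx⟩ := hcov x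
    exact ⟨A, Fin.fin_one_eq_zero i ▸ hA, hx⟩
  obtain ⟨A, hA, hp₀⟩ := hcov₀ (p 0)
  have hchain : ∀ i ≤ m, p i ∈ A := by
    intro i hi
    induction i with
    | zero => exact hp₀
    | succ i ih =>
      obtain ⟨B, hB, hpB⟩ := hcov₀ (p (i + 1))
      obtain rfl : A = B := by
        by_contra hne
        exact (hdisj 0 A hA B hB hne).not_ge
          ((setEDist_le_edist (ih (by omega)) hpB).trans (hp i (by omega)))
      exact hpB
  exact (edist_le_ediam_of_mem hp₀ (hchain m le_rfl)).trans (hdiam 0 A hA)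

end DiLE

def discreteInterval (a : ℝ) (k : ℕ) : Set ℝ := {x | ∃ j : ℕ, j ≤ k ∧ x = j * a}

namespace discreteInterval

variable {a : ℝ} {k : ℕ}

lemma edist_eq (ha : 0 ≤ a) {x y : discreteInterval a k} {i j : ℕ}
    (hx : (x : ℝ) = i * a) (hy : (y : ℝ) = j * a) :
    edist x y = ENNReal.ofReal (|(i : ℝ) - j| * a) := by
  rw [Subtype.edist_eq, edist_dist, Real.dist_eq, hx, hy, ← sub_mul, abs_mul, abs_of_nonneg ha]

theorem diLE_one (ha : 0 < a) (D : ℝ) : diLE (discreteInterval a k) a D 1 := by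
  refine diLE_of_coloring D (fun x => ⟨x.2.choose % 2, Nat.mod_lt _ two_pos⟩) ?_
  intro x y hxy hne
  obtain ⟨-, hx⟩ := x.2.choose_spec
  obtain ⟨-, hy⟩ := y.2.choose_spec
  set i := x.2.choose
  set j := y.2.choose
  have hij : i ≠ j := fun h => hne (Subtype.ext (by rw [hx, hy, h]))
  have hgap : (2 : ℝ) ≤ |(i : ℝ) - j| := by
    have hmod : i % 2 = j % 2 := Fin.mk.inj_iff.mp hxy
    have : (2 : ℤ) ≤ |(i : ℤ) - j| := by rw [le_abs]; omega
    exact_mod_cast this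
  rw [edist_eq ha.le hx hy, ENNReal.ofReal_lt_ofReal_iff (by positivity)]
  nlinarith

theorem not_diLE_zero (ha : 0 < a) {D : ℝ} (hD₀ : 0 ≤ D) (hD : D < k * a) :
    ¬ diLE (discreteInterval a k) a D 0 := by
  intro h
  let p : ℕ → discreteInterval a k := fun j => ⟨(min j k : ℕ) * a, min j k, min_le_right _ _, rfl⟩
  have hstep : ∀ i < k, edist (p i) (p (i + 1)) ≤ ENNReal.ofReal a := by
    intro i hi
    rw [edist_eq ha.le rfl rfl, min_eq_left hi.le, min_eq_left hi]
    simp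
  have hends := edist_le_of_diLE_zero h hstep
  rw [edist_eq ha.le rfl rfl, ENNReal.ofReal_le_ofReal_iff hD₀] at hends
  simp only [zero_le, inf_of_le_left, CharP.cast_eq_zero, min_self, zero_sub, abs_neg,
    Nat.abs_cast] at hends
  linarith

end discreteInterval

/-- for `k ≥ n+1`, `di_{(a, n·a)} I_a(k) = 1`. -/
theorem stmt1 (a : ℝ) (ha : 0 < a) (n k : ℕ) (hk : n + 1 ≤ k) :
    diLE ↥{x : ℝ | ∃ j : ℕ, j ≤ k ∧ x = (j : ℝ) * a} a ((n : ℝ) * a) 1 ∧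
      ¬ diLE ↥{x : ℝ | ∃ j : ℕ, j ≤ k ∧ x = (j : ℝ) * a} a ((n : ℝ) * a) 0 := by
  have hnk : (n : ℝ) + 1 ≤ k := by exact_mod_cast hk
  exact ⟨discreteInterval.diLE_one ha _,
    discreteInterval.not_diLE_zero ha (by positivity) (by nlinarith)⟩
end
end

section
/- Under conditions (I), (III), (IV) of the filtration construction, the asymptotic dimension with linear control of X is 0: there is c > 0 such that for every R there is λ > R with di_{(λ,cλ)} X ≤ 0. -/
open Metric Set Filter

noncomputable section

/-!
For `n ≥ 1`, conditions (I) and (IV) and the monotonicity of `a` make every point outside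
`Y (n - 1)` at distance at least `a n` from every other point of `X`. Hence `Y (n - 1)` and the
singletons of its complement form an `a n`-disjoint cover by sets of diameter `< a n` (by (III)),
which witnesses `di_{(λ, λ)} X ≤ 0` for every `λ` strictly between `max R (diam Y (n - 1))` and
`a n`; since `a n → ∞`, such `n` and `λ` exist for every `R`.
-/

theorem ofReal_le_setEDist {X : Type*} [PseudoMetricSpace X] {A B : Set X} {r : ℝ}
    (h : ∀ p ∈ A, ∀ q ∈ B, r ≤ dist p q) : ENNReal.ofReal r ≤ setEDist A B :=
  le_iInf₂ fun p hp => le_infEDist.mpr fun q hq => by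
    rw [edist_dist]
    exact ENNReal.ofReal_le_ofReal (h p hp q hq)

theorem diLE_zero_of_isolated_compl {X : Type*} [PseudoMetricSpace X] {S : Set X} {lam D r : ℝ}
    (hS : ediam S ≤ ENNReal.ofReal D)
    (hsep : ∀ p q, p ≠ q → q ∉ S → r ≤ dist p q)
    (hlam : ENNReal.ofReal lam < ENNReal.ofReal r) : diLE X lam D 0 := by
  have hsep' : ∀ p q, p ≠ q → p ∉ S ∨ q ∉ S → r ≤ dist p q := by
    rintro p q hpq (hp | hq)
    · rw [dist_comm]; exact hsep q p hpq.symm hp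
    · exact hsep p q hpq hq
  refine ⟨fun _ => insert S ((fun x => {x}) '' Sᶜ), ?_, ?_, ?_⟩
  · rintro _ A hA B hB hAB
    refine hlam.trans_le (ofReal_le_setEDist ?_)
    rcases hA with rfl | ⟨x, hx, rfl⟩ <;> rcases hB with rfl | ⟨y, hy, rfl⟩
    · exact absurd rfl hAB
    · rintro p hp q rfl
      exact hsep' p q (ne_of_mem_of_not_mem hp hy) (Or.inr hy)
    · rintro p rfl q hq
      exact hsep' p q (ne_of_mem_of_not_mem hq hx).symm (Or.inl hx)
    · rintro p rfl q rfl
      exact hsep' p q (fun h => hAB (h ▸ rfl)) (Or.inl hx)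
  · rintro _ A (rfl | ⟨x, -, rfl⟩)
    · exact hS
    · exact ediam_singleton.trans_le zero_le
  · intro x
    by_cases hx : x ∈ S
    · exact ⟨0, S, mem_insert _ _, hx⟩
    · exact ⟨0, {x}, mem_insert_of_mem _ ⟨x, hx, rfl⟩, rfl⟩

theorem exists_mem_diff_of_not_mem {X : Type*} {Y : ℕ → Set X} (hYmono : Monotone Y)
    (hcover : ⋃ n, Y n = univ) {x : X} {k : ℕ} (hx : x ∉ Y k) :
    ∃ m, k < m ∧ x ∈ Y m \ Y (m - 1) := by
  classical
  have hex : ∃ m, x ∈ Y m := mem_iUnion.mp (hcover ▸ mem_univ x)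
  have hk : k < Nat.find hex :=
    lt_of_not_ge fun h => hx (hYmono h (Nat.find_spec hex))
  exact ⟨Nat.find hex, hk, Nat.find_spec hex, Nat.find_min hex (by omega)⟩

theorem le_dist_of_mem_diff {X : Type*} [PseudoMetricSpace X] {Y : ℕ → Set X} {a : ℕ → ℝ}
    (hYmono : Monotone Y) (hcover : ⋃ n, Y n = univ) (hamono : Monotone a)
    (hI : ∀ n, 1 ≤ n → ∀ x ∈ Y n \ Y (n - 1), ∀ y ∈ Y n \ Y (n - 1),
      x ≠ y → a n ≤ dist x y)
    (hIV : ∀ n, 1 ≤ n → ∀ x ∈ Y (n - 1), ∀ z ∈ Y n \ Y (n - 1), a n ≤ dist x z)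
    {m : ℕ} (hm : 1 ≤ m) {p q : X} (hpq : p ≠ q) (hq : q ∈ Y m \ Y (m - 1)) :
    a m ≤ dist p q := by
  by_cases hp : p ∈ Y (m - 1)
  · exact hIV m hm p hp q hq
  obtain ⟨l, hml, hpl⟩ := exists_mem_diff_of_not_mem hYmono hcover hp
  obtain rfl | hlt : m = l ∨ m < l := by omega
  · exact hI m hm p hpl q hq hpq
  · have hql : q ∈ Y (l - 1) := hYmono (by omega) hq.1
    rw [dist_comm]
    exact (hamono hlt.le).trans (hIV l (by omega) q hql p hpl)

theorem stmt4_general {X : Type*} [MetricSpace X] (Y : ℕ → Set X) (a : ℕ → ℝ)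
    (hYmono : Monotone Y) (hcover : ⋃ n, Y n = Set.univ)
    (hamono : Monotone a) (hatop : Tendsto a atTop atTop)
    (hI : ∀ n, 1 ≤ n → ∀ x ∈ Y n \ Y (n - 1), ∀ y ∈ Y n \ Y (n - 1),
      x ≠ y → a n ≤ dist x y)
    (hIII : ∀ n, 1 ≤ n → EMetric.diam (Y (n - 1)) < ENNReal.ofReal (a n))
    (hIV : ∀ n, 1 ≤ n → ∀ x ∈ Y (n - 1), ∀ z ∈ Y n \ Y (n - 1), a n ≤ dist x z) :
    lasStarLE X 0 := by
  refine ⟨1, one_pos, fun R => ?_⟩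
  obtain ⟨n, hRn, hn⟩ :=
    ((hatop.eventually (eventually_gt_atTop R)).and (eventually_ge_atTop 1)).exists
  have han : 0 < a n := ENNReal.ofReal_pos.mp (pos_of_gt (hIII n hn))
  have hsep : ∀ p q, p ≠ q → q ∉ Y (n - 1) → a n ≤ dist p q := fun p q hpq hq => by
    obtain ⟨m, hnm, hqm⟩ := exists_mem_diff_of_not_mem hYmono hcover hq
    exact (hamono (by omega)).trans (le_dist_of_mem_diff hYmono hcover hamono hI hIV
      (by omega) hpq hqm)
  obtain ⟨lam, -, hlam, hlam_lt⟩ := ENNReal.lt_iff_exists_real_btwn.mp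
    (max_lt (hIII n hn) ((ENNReal.ofReal_lt_ofReal_iff han).mpr hRn))
  refine ⟨lam, (ENNReal.ofReal_lt_ofReal_iff'.mp (le_max_right _ _ |>.trans_lt hlam)).1, ?_⟩
  rw [one_mul]
  exact diLE_zero_of_isolated_compl (le_max_left _ _ |>.trans hlam.le) hsep hlam_lt

/-- under the filtration conditions (I), (III), (IV), `las_* X = 0`. -/
theorem stmt4 {X : Type*} [MetricSpace X] (Y : ℕ → Set X) (a : ℕ → ℝ)
    (hY0 : Y 0 = ∅) (hYmono : Monotone Y) (hcover : ⋃ n, Y n = Set.univ)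
    (hamono : Monotone a) (hatop : Tendsto a atTop atTop)
    (hI : ∀ n, 1 ≤ n → ∀ x ∈ Y n \ Y (n - 1), ∀ y ∈ Y n \ Y (n - 1),
      x ≠ y → a n ≤ dist x y)
    (hIII : ∀ n, 1 ≤ n → EMetric.diam (Y (n - 1)) < ENNReal.ofReal (a n))
    (hIV : ∀ n, 1 ≤ n → ∀ x ∈ Y (n - 1), ∀ z ∈ Y n \ Y (n - 1), a n ≤ dist x z) :
    lasStarLE X 0 :=
  stmt4_general Y a hYmono hcover hamono hatop hI hIII hIV
end
end

section
/- Let G = ⊕_{i=1}^∞ ℤ_{p^i} with the metric d(x̄, ȳ) = Σ_i a_i |x_i − y_i|_{p^i}, where a_n is a monotone sequence of natural numbers tending to infinity. Then this metric is proper: every closed ball is finite (hence compact). -/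
open Metric Set Filter

noncomputable section

/-- The cyclic word norm on `ℤ/m`: `|z|_m = min(val z, m - val z)`. -/
def cycNorm (m : ℕ) (z : ZMod m) : ℕ := min z.val (m - z.val)

/-- The weighted `ℓ¹` metric on `G = ⊕_{i=1}^∞ ℤ_{p^i}`:
`d(x̄,ȳ) = Σ_i a_i |x_i - y_i|_{p^i}` (here the `i`-th factor, `i : ℕ`, is `ℤ_{p^{i+1}}`). -/
def Gdist (p : ℕ) (a : ℕ → ℕ) (x y : Π₀ i : ℕ, ZMod (p ^ (i + 1))) : ℝ :=
  ∑ i ∈ (x - y).support, (a i : ℝ) * (cycNorm (p ^ (i + 1)) ((x - y) i) : ℝ)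

/-! A point of norm `≤ R` has every nonzero coordinate `i` of weight `a i ≤ R`, since each
nonzero coordinate contributes at least its weight. As `a i → ∞`, the ball lies in the set of
elements supported in a fixed finite set of coordinates, which is finite because every factor is. -/

theorem DFinsupp.finite_setOf_support_subset {ι : Type*} [DecidableEq ι] {β : ι → Type*}
    [∀ i, Zero (β i)] [∀ i (x : β i), Decidable (x ≠ 0)] [∀ i, Finite (β i)] (s : Finset ι) :
    {x : Π₀ i, β i | x.support ⊆ s}.Finite := by
  refine Set.Finite.of_finite_image (f := fun x (i : s) => x i) (Set.toFinite _) ?_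
  intro x hx y hy hxy
  ext i
  by_cases hi : i ∈ s
  · exact congrFun hxy ⟨i, hi⟩
  · rw [DFinsupp.notMem_support_iff.mp (fun h => hi (hx h)),
      DFinsupp.notMem_support_iff.mp (fun h => hi (hy h))]

theorem one_le_cycNorm {m : ℕ} [NeZero m] {z : ZMod m} (hz : z ≠ 0) : 1 ≤ cycNorm m z := by
  have hval : z.val ≠ 0 := (ZMod.val_ne_zero z).mpr hz
  have hlt : z.val < m := ZMod.val_lt z
  unfold cycNorm
  omega

theorem weight_le_Gdist_zero {p : ℕ} (hp : p ≠ 0) (a : ℕ → ℕ)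
    {x : Π₀ i : ℕ, ZMod (p ^ (i + 1))} {i : ℕ} (hi : x i ≠ 0) : (a i : ℝ) ≤ Gdist p a x 0 := by
  have : NeZero (p ^ (i + 1)) := ⟨pow_ne_zero _ hp⟩
  have hnorm : (1 : ℝ) ≤ cycNorm (p ^ (i + 1)) (x i) := by exact_mod_cast one_le_cycNorm hi
  calc (a i : ℝ) ≤ a i * cycNorm (p ^ (i + 1)) (x i) :=
        le_mul_of_one_le_right (Nat.cast_nonneg _) hnorm
    _ ≤ Gdist p a x 0 := by
        rw [Gdist, sub_zero]
        exact Finset.single_le_sum (f := fun j => (a j : ℝ) * cycNorm (p ^ (j + 1)) (x j))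
          (fun j _ => by positivity) (DFinsupp.mem_support_iff.mpr hi)

theorem stmt9_general (p : ℕ) (hp : p.Prime) (a : ℕ → ℕ)
    (hatop : Tendsto (fun n => (a n : ℝ)) atTop atTop) (R : ℝ) :
    {x : Π₀ i : ℕ, ZMod (p ^ (i + 1)) | Gdist p a x 0 ≤ R}.Finite := by
  have : ∀ n : ℕ, NeZero (p ^ (n + 1)) := fun n => ⟨pow_ne_zero _ hp.ne_zero⟩
  obtain ⟨N, hN⟩ := (hatop.eventually_gt_atTop R).exists_forall_of_atTop
  refine (DFinsupp.finite_setOf_support_subset (Finset.range N)).subset ?_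
  intro x hx i hi
  by_contra hiN
  have hweight := weight_le_Gdist_zero hp.ne_zero a (DFinsupp.mem_support_iff.mp hi)
  have hlarge := hN i (by simpa using hiN)
  exact (hweight.trans hx).not_gt hlarge

/-- the weighted metric on `G = ⊕ ℤ_{pⁱ}` with monotone weights `aₙ → ∞`
is proper: every ball is finite. -/
theorem stmt9 (p : ℕ) (hp : p.Prime) (a : ℕ → ℕ) (hmono : Monotone a)
    (hatop : Tendsto (fun n => (a n : ℝ)) atTop atTop) (R : ℝ) (hR : 0 < R) :
    {x : Π₀ i : ℕ, ZMod (p ^ (i + 1)) | Gdist p a x 0 ≤ R}.Finite :=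
  stmt9_general p hp a hatop R
end
end

section
/- Let G = ⊕_{i=1}^∞ ℤ_{p^i} with metric d(x̄,ȳ) = Σ a_i|x_i−y_i|_{p^i}, with (a_n) chosen so that a_n > 1 + diam of the first n−1 factors and p^n ≥ 2(n+1). Then ANas G ≥ 1; in particular ANas G ≠ las_* G, since las_* G = 0. Thus there exists a countable p-local group with a proper invariant metric whose asymptotic Assouad–Nagata dimension strictly exceeds its asymptotic dimension with linear control. -/
open Metric Set Filter

noncomputable section

/-! The `n`-th coordinate axis of `G` is the cycle `ℤ/p^{n+1}` scaled by `a n`: consecutive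
points are `a n` apart while the antipodal point is `a n * ⌊p^{n+1}/2⌋` away. A `0`-dimensional
cover at scale `a n` must put the whole cycle into one member, so its control constant is at
least `⌊p^{n+1}/2⌋`, which is unbounded in `n`; hence `ANas G ≥ 1`. On the other hand, elements
agreeing from the `n`-th coordinate on are at distance at most `∑_{i<n} a i ⌊p^{i+1}/2⌋ < a n - 1`,
while elements that differ at some coordinate `j ≥ n` are at distance at least `a j ≥ a n`.
These classes therefore give a `0`-dimensional cover at every scale `a n - 1` with control
constant `1`, so `las_* G = 0`. -/

theorem diLE.dist_le_of_chain {X : Type*} [PseudoMetricSpace X] {lam D : ℝ}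
    (h : diLE X lam D 0) (hD : 0 ≤ D) (f : ℕ → X) (hf : ∀ k, dist (f (k + 1)) (f k) ≤ lam)
    (k : ℕ) : dist (f k) (f 0) ≤ D := by
  obtain ⟨U, hsep, hbdd, hcover⟩ := h
  have hmem : ∀ x, ∃ A ∈ U 0, x ∈ A := fun x => by
    obtain ⟨i, A, hA, hx⟩ := hcover x
    exact ⟨A, Subsingleton.elim (α := Fin 1) i 0 ▸ hA, hx⟩
  choose A hAU hxA using hmem
  have hsame : ∀ x y, dist x y ≤ lam → A x = A y := by
    intro x y hxy
    by_contra hne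
    refine (hsep 0 _ (hAU x) _ (hAU y) hne).not_ge ?_
    calc setEDist (A x) (A y) ≤ Metric.infEDist x (A y) := iInf₂_le x (hxA x)
      _ ≤ edist x y := Metric.infEDist_le_edist_of_mem (hxA y)
      _ ≤ ENNReal.ofReal lam := by rw [edist_dist]; exact ENNReal.ofReal_le_ofReal hxy
  have hchain : ∀ k, A (f k) = A (f 0) := fun k => by
    induction k with
    | zero => rfl
    | succ k ih => exact (hsame _ _ (hf k)).trans ih
  refine (edist_le_ofReal hD).1 ((Metric.edist_le_ediam_of_mem ?_ (hxA (f 0))).trans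
    (hbdd 0 _ (hAU (f 0))))
  exact hchain k ▸ hxA (f k)

theorem diLE_zero_of_fibers {X β : Type*} [PseudoMetricSpace X] (q : X → β) {lam r D : ℝ}
    (hlam : 0 ≤ lam) (hlr : lam < r) (hsep : ∀ x y, q x ≠ q y → r ≤ dist x y)
    (hbdd : ∀ x y, q x = q y → dist x y ≤ D) : diLE X lam D 0 := by
  refine ⟨fun _ => range fun x => q ⁻¹' {q x}, ?_, ?_, fun x => ⟨0, _, ⟨x, rfl⟩, rfl⟩⟩
  · rintro - - ⟨x, rfl⟩ - ⟨y, rfl⟩ hne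
    have hqxy : q x ≠ q y := fun h => hne (by simp only [h])
    refine ((ENNReal.ofReal_lt_ofReal_iff_of_nonneg hlam).2 hlr).trans_le ?_
    refine le_iInf₂ fun s hs => Metric.le_infEDist.2 fun t ht => ?_
    rw [edist_dist]
    exact ENNReal.ofReal_le_ofReal (hsep s t (by rwa [hs, ht]))
  · rintro - - ⟨x, rfl⟩
    refine Metric.ediam_le fun s hs t ht => ?_
    rw [edist_dist]
    exact ENNReal.ofReal_le_ofReal (hbdd s t (hs.trans ht.symm))

theorem strictMono_of_sum_mul_lt {a w : ℕ → ℕ} (hw : ∀ i, 1 ≤ w i)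
    (ha : ∀ n, ∑ i ∈ Finset.range n, a i * w i < a n) : StrictMono a :=
  strictMono_nat_of_lt_succ fun n =>
    calc a n ≤ a n * w n := Nat.le_mul_of_pos_right _ (hw n)
      _ ≤ ∑ i ∈ Finset.range (n + 1), a i * w i :=
        Finset.single_le_sum (f := fun i => a i * w i) (fun _ _ => Nat.zero_le _)
          (Finset.self_mem_range_succ n)
      _ < a (n + 1) := ha (n + 1)

theorem cycNorm_one_le (m : ℕ) : cycNorm m 1 ≤ 1 :=
  (min_le_left _ _).trans ((ZMod.val_one_eq_one_mod m).trans_le (Nat.mod_le _ _))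

theorem cycNorm_le_half (m : ℕ) (z : ZMod m) : cycNorm m z ≤ m / 2 := by
  unfold cycNorm
  omega

theorem cycNorm_natCast_half (m : ℕ) [NeZero m] : cycNorm m ((m / 2 : ℕ) : ZMod m) = m / 2 := by
  have hm : m / 2 < m := Nat.div_lt_self (Nat.pos_of_neZero m) one_lt_two
  unfold cycNorm
  rw [ZMod.val_cast_of_lt hm]
  omega

abbrev ZModPowSum (p : ℕ) : Type := Π₀ i : ℕ, ZMod (p ^ (i + 1))

theorem le_Gdist_of_mem_support {p : ℕ} (hp : p ≠ 0) (a : ℕ → ℕ) {x y : ZModPowSum p} {i : ℕ}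
    (h : i ∈ (x - y).support) : (a i : ℝ) ≤ Gdist p a x y := by
  have hne : (x - y) i ≠ 0 := DFinsupp.mem_support_iff.1 h
  have : NeZero (p ^ (i + 1)) := ⟨pow_ne_zero _ hp⟩
  calc (a i : ℝ) ≤ a i * (cycNorm (p ^ (i + 1)) ((x - y) i) : ℝ) :=
        le_mul_of_one_le_right (Nat.cast_nonneg _) (by exact_mod_cast one_le_cycNorm hne)
    _ ≤ Gdist p a x y :=
        Finset.single_le_sum (f := fun i => (a i : ℝ) * cycNorm (p ^ (i + 1)) ((x - y) i))
          (fun _ _ => by positivity) h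

theorem Gdist_le_of_support_subset (p : ℕ) (a : ℕ → ℕ) {x y : ZModPowSum p} {n : ℕ}
    (h : (x - y).support ⊆ Finset.range n) :
    Gdist p a x y ≤ ((∑ i ∈ Finset.range n, a i * (p ^ (i + 1) / 2) : ℕ) : ℝ) := by
  push_cast
  calc Gdist p a x y
      ≤ ∑ i ∈ (x - y).support, (a i : ℝ) * ((p ^ (i + 1) / 2 : ℕ) : ℝ) :=
        Finset.sum_le_sum fun i _ => mul_le_mul_of_nonneg_left
          (by exact_mod_cast cycNorm_le_half _ _) (Nat.cast_nonneg _)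
    _ ≤ ∑ i ∈ Finset.range n, (a i : ℝ) * ((p ^ (i + 1) / 2 : ℕ) : ℝ) :=
        Finset.sum_le_sum_of_subset_of_nonneg h fun _ _ _ => by positivity

theorem Gdist_single_single (p : ℕ) (a : ℕ → ℕ) (n : ℕ) (u v : ZMod (p ^ (n + 1))) :
    Gdist p a (DFinsupp.single n u) (DFinsupp.single n v) =
      a n * cycNorm (p ^ (n + 1)) (u - v) := by
  rw [Gdist, ← DFinsupp.single_sub]
  by_cases huv : u - v = 0
  · simp [huv, cycNorm]
  · rw [DFinsupp.support_single (β := fun i => ZMod (p ^ (i + 1))) huv, Finset.sum_singleton,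
      DFinsupp.single_eq_same]

theorem tendsto_half_pow_atTop {p : ℕ} (hp : 2 ≤ p) :
    Tendsto (fun n : ℕ => p ^ (n + 1) / 2) atTop atTop := by
  refine tendsto_atTop_mono (fun n => ?_) (tendsto_pow_atTop_atTop_of_one_lt hp)
  rw [Nat.le_div_iff_mul_le two_pos, pow_succ]
  exact Nat.mul_le_mul_left _ hp

theorem strictMono_of_Gdist_weights {p : ℕ} (hp : 2 ≤ p) {a : ℕ → ℕ}
    (ha : ∀ n : ℕ, 1 + ∑ i ∈ Finset.range n, a i * (p ^ (i + 1) / 2) < a n) : StrictMono a :=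
  strictMono_of_sum_mul_lt
    (fun i => (Nat.le_div_iff_mul_le two_pos).2 (hp.trans (Nat.le_self_pow i.succ_ne_zero p)))
    (fun n => (Nat.le_add_left _ _).trans_lt (ha n))

theorem not_ANasLE_zero_of_Gdist {p : ℕ} (hp : 2 ≤ p) {a : ℕ → ℕ}
    (ha : ∀ n : ℕ, 1 + ∑ i ∈ Finset.range n, a i * (p ^ (i + 1) / 2) < a n)
    {X : Type*} [MetricSpace X] (e : X ≃ ZModPowSum p)
    (he : ∀ x y : X, dist x y = Gdist p a (e x) (e y)) : ¬ ANasLE X 0 := by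
  rintro ⟨c, hc, r₀, hr⟩
  have ha_pos : ∀ n, (0 : ℝ) < a n := fun n => by exact_mod_cast (ha n).pos
  have ha_tendsto := (strictMono_of_Gdist_weights hp ha).tendsto_atTop
  obtain ⟨n, hn, hcn⟩ : ∃ n, r₀ < a n ∧ c < ((p ^ (n + 1) / 2 : ℕ) : ℝ) :=
    ((tendsto_natCast_atTop_atTop.comp ha_tendsto).eventually_gt_atTop r₀).and
      ((tendsto_natCast_atTop_atTop.comp (tendsto_half_pow_atTop hp)).eventually_gt_atTop c)
      |>.exists
  have : NeZero (p ^ (n + 1)) := ⟨by positivity⟩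
  set f : ℕ → X := fun k => e.symm (DFinsupp.single n (k : ZMod (p ^ (n + 1))))
  have hdist : ∀ j k : ℕ,
      dist (f j) (f k) = a n * cycNorm (p ^ (n + 1)) ((j : ZMod (p ^ (n + 1))) - k) := fun j k => by
    simp only [f, he, Equiv.apply_symm_apply, Gdist_single_single]
  have hstep : ∀ k, dist (f (k + 1)) (f k) ≤ a n := fun k => by
    have hcyc : cycNorm (p ^ (n + 1)) (((k + 1 : ℕ) : ZMod (p ^ (n + 1))) - k) ≤ 1 := by
      rw [Nat.cast_succ, add_sub_cancel_left]
      exact cycNorm_one_le _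
    rw [hdist]
    exact mul_le_of_le_one_right (ha_pos n).le (by exact_mod_cast hcyc)
  have hfar := (hr _ hn).dist_le_of_chain (by positivity) f hstep (p ^ (n + 1) / 2)
  rw [hdist, Nat.cast_zero, sub_zero, cycNorm_natCast_half, mul_comm c] at hfar
  exact hcn.not_ge (le_of_mul_le_mul_left hfar (ha_pos n))

theorem lasStarLE_zero_of_Gdist {p : ℕ} (hp : 2 ≤ p) {a : ℕ → ℕ}
    (ha : ∀ n : ℕ, 1 + ∑ i ∈ Finset.range n, a i * (p ^ (i + 1) / 2) < a n)
    {X : Type*} [MetricSpace X] (e : X ≃ ZModPowSum p)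
    (he : ∀ x y : X, dist x y = Gdist p a (e x) (e y)) : lasStarLE X 0 := by
  have hmono := strictMono_of_Gdist_weights hp ha
  refine ⟨1, one_pos, fun R => ?_⟩
  obtain ⟨n, hn : R + 1 < a n⟩ :=
    ((tendsto_natCast_atTop_atTop.comp hmono.tendsto_atTop).eventually_gt_atTop (R + 1)).exists
  have hbound : 1 + ((∑ i ∈ Finset.range n, a i * (p ^ (i + 1) / 2) : ℕ) : ℝ) < a n := by
    exact_mod_cast ha n
  refine ⟨a n - 1, by linarith, ?_⟩
  rw [one_mul]
  refine diLE_zero_of_fibers (fun x (i : ℕ) (_ : n ≤ i) => e x i) (r := a n)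
    (sub_nonneg.2 (Nat.one_le_cast.2 (ha n).pos)) (by linarith)
    (fun x y hxy => ?_) (fun x y hxy => ?_)
  · obtain ⟨j, hj, hne⟩ : ∃ j, n ≤ j ∧ e x j ≠ e y j := by
      by_contra! h
      exact hxy (funext fun j => funext (h j))
    have hmem : j ∈ (e x - e y).support := by
      rw [DFinsupp.mem_support_iff, DFinsupp.sub_apply]
      exact sub_ne_zero.2 hne
    rw [he]
    calc (a n : ℝ) ≤ a j := by exact_mod_cast hmono.monotone hj
      _ ≤ Gdist p a (e x) (e y) := le_Gdist_of_mem_support (by omega) a hmem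
  · have hsupp : (e x - e y).support ⊆ Finset.range n := fun j hj => by
      rw [Finset.mem_range]
      by_contra! hnj
      refine DFinsupp.mem_support_iff.1 hj ?_
      rw [DFinsupp.sub_apply, sub_eq_zero]
      exact congrFun (congrFun hxy j) hnj
    rw [he]
    linarith [Gdist_le_of_support_subset p a hsupp]

theorem stmt12_general (p : ℕ) (hp : p.Prime) (a : ℕ → ℕ)
    (ha : ∀ n : ℕ, 1 + ∑ i ∈ Finset.range n, a i * (p ^ (i + 1) / 2) < a n)
    (X : Type*) [MetricSpace X] (e : X ≃ (Π₀ i : ℕ, ZMod (p ^ (i + 1))))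
    (he : ∀ x y : X, dist x y = Gdist p a (e x) (e y)) :
    ¬ ANasLE X 0 ∧ lasStarLE X 0 :=
  ⟨not_ANasLE_zero_of_Gdist hp.two_le ha e he, lasStarLE_zero_of_Gdist hp.two_le ha e he⟩

/-- `ANas G ≥ 1` while `las_* G = 0`, so `ANas G ≠ las_* G`. -/
theorem stmt12 (p : ℕ) (hp : p.Prime) (a : ℕ → ℕ) (hmono : Monotone a)
    (ha : ∀ n : ℕ, 1 + ∑ i ∈ Finset.range n, a i * (p ^ (i + 1) / 2) < a n)
    (hpn : ∀ n : ℕ, 2 * (n + 2) ≤ p ^ (n + 1))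
    (X : Type*) [MetricSpace X] (e : X ≃ (Π₀ i : ℕ, ZMod (p ^ (i + 1))))
    (he : ∀ x y : X, dist x y = Gdist p a (e x) (e y)) :
    ¬ ANasLE X 0 ∧ lasStarLE X 0 :=
  stmt12_general p hp a ha X e he
end
end

section
/- Let X be a metric space, c > 0, and define f_c : ℕ → ℕ ∪ {∞} by f_c(λ) = di_{(λ,cλ)} X (the least n with di_{(λ,cλ)} X ≤ n, or ∞ if none). For a non-principal ultrafilter ω on ℕ, define las_ω X = min over c ∈ ℕ of lim_ω f_c. Then for every metric space X and every non-principal ultrafilter ω: las_* X ≤ las_ω X ≤ ANas X. -/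
open Metric Set Filter

noncomputable section

/-- `fdim X c lam = di_{(lam, c·lam)} X ∈ ℕ ∪ {∞}`, the least `n` with
`di_{(lam, c·lam)} X ≤ n`, or `∞` if there is none. -/
def fdim (X : Type*) [PseudoMetricSpace X] (c lam : ℕ) : ℕ∞ :=
  ⨅ n ∈ {n : ℕ | diLE X (lam : ℝ) ((c : ℝ) * (lam : ℝ)) n}, (n : ℕ∞)

/-- The ultralimit of `f : ℕ → ℕ ∪ {∞}` along the ultrafilter `ω`, in the one-point
compactification `ℕ ∪ {∞}`: the unique finite value attained `ω`-a.e., or `∞` if none. -/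
def ulim (ω : Ultrafilter ℕ) (f : ℕ → ℕ∞) : ℕ∞ :=
  open scoped Classical in
  if h : ∃ v : ℕ, {m | f m = (v : ℕ∞)} ∈ ω then ((Classical.choose h : ℕ) : ℕ∞) else ⊤

/-- `las_ω X`, the asymptotic dimension with linear control with respect to the
ultrafilter `ω` : the minimum over `c` of `lim_ω f_c`. -/
def lasOmega (X : Type*) [PseudoMetricSpace X] (ω : Ultrafilter ℕ) : ℕ∞ :=
  ⨅ c : ℕ, ulim ω (fun lam => fdim X c lam)

/-- The asymptotic dimension with linear control of `X` as a value in `ℕ ∪ {∞}`. -/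
def lasStarDim (X : Type*) [PseudoMetricSpace X] : ℕ∞ :=
  ⨅ n ∈ {n : ℕ | lasStarLE X n}, (n : ℕ∞)

/-- The asymptotic Assouad–Nagata dimension of `X` as a value in `ℕ ∪ {∞}`. -/
def ANasDim (X : Type*) [PseudoMetricSpace X] : ℕ∞ :=
  ⨅ n ∈ {n : ℕ | ANasLE X n}, (n : ℕ∞)

/-! If `lim_ω f_c = v` is finite, then `f_c = v` on an `ω`-large set, which is infinite because
`ω` is non-principal; so `di_{(λ, cλ)} X ≤ v` for arbitrarily large `λ`, i.e. `las_* X ≤ v`.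
Conversely, a bound `ANas X ≤ n` with constant `c` gives `di_{(λ, ⌈c⌉λ)} X ≤ n` for all large `λ`,
a cofinite and hence `ω`-large set, so `lim_ω f_{⌈c⌉} ≤ n`. -/

section Ultralimit

variable {ω : Ultrafilter ℕ} {f : ℕ → ℕ∞}

lemma ulim_eq_of_mem {v : ℕ} (h : {m | f m = v} ∈ ω) : ulim ω f = v := by
  have hex : ∃ v : ℕ, {m | f m = (v : ℕ∞)} ∈ ω := ⟨v, h⟩
  obtain ⟨m, hm_choose, hm_v⟩ := Filter.nonempty_of_mem (inter_mem (Classical.choose_spec hex) h)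
  rw [ulim, dif_pos hex]
  exact hm_choose.symm.trans hm_v

lemma mem_of_ulim_eq {v : ℕ} (h : ulim ω f = v) : {m | f m = v} ∈ ω := by
  rw [ulim] at h
  split_ifs at h with hex
  · exact Nat.cast_injective h ▸ Classical.choose_spec hex
  · exact absurd h (ENat.top_ne_natCast v)

lemma ulim_le_of_eventually_le {n : ℕ} (h : ∀ᶠ m in ω, f m ≤ n) : ulim ω f ≤ n := by
  have hcover : {m | f m ≤ n} ⊆ ⋃ k ∈ Iic n, {m | f m = k} := fun m hm => by
    obtain ⟨k, hk, hkn⟩ := ENat.le_natCast_iff.mp hm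
    exact mem_biUnion hkn hk
  obtain ⟨k, hkn, hk⟩ :=
    (Ultrafilter.finite_biUnion_mem_iff (finite_Iic n)).mp (ω.mem_of_superset h hcover)
  rw [ulim_eq_of_mem hk]
  exact_mod_cast hkn

end Ultralimit

section Dimension

variable {X : Type*} [PseudoMetricSpace X]

lemma diLE.mono_control {lam D D' : ℝ} {n : ℕ} (hD : D ≤ D') (h : diLE X lam D n) :
    diLE X lam D' n := by
  obtain ⟨U, hdisj, hdiam, hcover⟩ := h
  exact ⟨U, hdisj, fun i A hA => (hdiam i A hA).trans (ENNReal.ofReal_le_ofReal hD), hcover⟩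

lemma diLE.mono_dim {lam D : ℝ} {n n' : ℕ} (hn : n ≤ n') (h : diLE X lam D n) :
    diLE X lam D n' := by
  obtain ⟨U, hdisj, hdiam, hcover⟩ := h
  let ι : Fin (n + 1) → Fin (n' + 1) := Fin.castLE (by omega)
  have hmem {j A} : A ∈ ⋃ (i) (_ : ι i = j), U i ↔ ∃ i, ι i = j ∧ A ∈ U i := by simp
  refine ⟨fun j => ⋃ (i) (_ : ι i = j), U i, ?_, ?_, ?_⟩
  · rintro j A hA B hB hAB
    obtain ⟨i, rfl, hAi⟩ := hmem.mp hA
    obtain ⟨i', hi', hBi'⟩ := hmem.mp hB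
    exact hdisj i A hAi B (Fin.castLE_injective _ hi' ▸ hBi') hAB
  · rintro j A hA
    obtain ⟨i, -, hA⟩ := hmem.mp hA
    exact hdiam i A hA
  · intro x
    obtain ⟨i, A, hA, hx⟩ := hcover x
    exact ⟨ι i, A, hmem.mpr ⟨i, rfl, hA⟩, hx⟩

lemma fdim_le_iff {c lam n : ℕ} : fdim X c lam ≤ n ↔ diLE X lam (c * lam) n := by
  refine ⟨fun h => ?_, fun h => iInf₂_le n h⟩
  rw [fdim] at h
  set S := {k : ℕ | diLE X lam (c * lam) k}
  have hS : S.Nonempty := by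
    by_contra hS
    rw [not_nonempty_iff_eq_empty.mp hS] at h
    simp at h
  rw [← ENat.natCast_sInf hS, Nat.cast_le] at h
  exact (Nat.sInf_mem hS).mono_dim h

lemma lasStarLE_of_frequently {c n : ℕ}
    (h : ∃ᶠ lam : ℕ in atTop, diLE X lam (c * lam) n) : lasStarLE X n := by
  -- `c` may be `0`, while `lasStarLE` asks for a positive constant.
  refine ⟨c + 1, by positivity, fun R => ?_⟩
  obtain ⟨lam, hlam, hdi⟩ := frequently_atTop.mp h (⌈R⌉₊ + 1)
  refine ⟨lam, ?_, hdi.mono_control ?_⟩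
  · calc R ≤ ⌈R⌉₊ := Nat.le_ceil R
      _ < lam := by exact_mod_cast hlam
  · gcongr; linarith

lemma ANasLE.exists_eventually_diLE {n : ℕ} (h : ANasLE X n) :
    ∃ c : ℕ, ∀ᶠ lam : ℕ in atTop, diLE X lam (c * lam) n := by
  obtain ⟨c, -, r₀, hr₀⟩ := h
  refine ⟨⌈c⌉₊, (eventually_gt_atTop ⌈r₀⌉₊).mono fun lam hlam => ?_⟩
  refine (hr₀ lam ?_).mono_control (by gcongr; exact Nat.le_ceil c)
  calc r₀ ≤ ⌈r₀⌉₊ := Nat.le_ceil r₀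
    _ < lam := by exact_mod_cast hlam

end Dimension

/-- for every metric space `X` and non-principal ultrafilter `ω`,
`las_* X ≤ las_ω X ≤ ANas X`. -/
theorem stmt13 (X : Type*) [MetricSpace X] (ω : Ultrafilter ℕ)
    (hω : (↑ω : Filter ℕ) ≤ Filter.cofinite) :
    lasStarDim X ≤ lasOmega X ω ∧ lasOmega X ω ≤ ANasDim X := by
  rw [Nat.cofinite_eq_atTop] at hω
  constructor
  · refine le_iInf fun c => ?_
    cases hv : ulim ω (fun lam => fdim X c lam) using ENat.recTopCoe with
    | top => exact le_top
    | coe v =>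
      have hdi : ∀ᶠ lam : ℕ in ω, diLE X lam (c * lam) v :=
        ω.mem_of_superset (mem_of_ulim_eq hv) fun _ hm => fdim_le_iff.mp hm.le
      exact iInf₂_le v (lasStarLE_of_frequently (hdi.frequently.filter_mono hω))
  · refine le_iInf₂ fun n hn => ?_
    obtain ⟨c, hc⟩ := hn.exists_eventually_diLE
    exact (iInf_le _ c).trans
      (ulim_le_of_eventually_le (hω (hc.mono fun _ => fdim_le_iff.mpr)))
end
end

section
/- If sup over all non-principal ultrafilters ω of las_ω X equals k < ∞, then ANas X ≤ k. Hence ANas X = sup{las_ω X : ω ∈ ℕ*}. -/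
/-!
If `ANas X ≤ n` with constant `c`, then `f_⌈c⌉(λ) ≤ n` for all large integers `λ`, hence
`ω`-almost surely for every non-principal ultrafilter `ω`.

Conversely, suppose `las_ω X ≤ k` for every `ω ∈ ℕ*`. The sets `{ω | f_c ≤ k ω-a.e.}` are open in
the Stone–Čech compactification, increase with `c`, and cover the closed (hence compact) set `ℕ*`,
so a single `c` works for every `ω`. That means `f_c(λ) ≤ k` for all but finitely many integer
scales `λ`; rounding a real scale up to an integer costs at most a factor `2` in the control.
-/

open Metric Set Filter

noncomputable section

lemma diLE.mono {X : Type*} [PseudoMetricSpace X] {lam D lam' D' : ℝ} {n n' : ℕ}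
    (h : diLE X lam D n) (hlam : lam' ≤ lam) (hD : D ≤ D') (hn : n ≤ n') :
    diLE X lam' D' n' := by
  obtain ⟨U, hsep, hdiam, hcov⟩ := h
  refine ⟨fun i => if hi : (i : ℕ) < n + 1 then U ⟨i, hi⟩ else ∅, ?_, ?_, ?_⟩
  · intro i A hA B hB hAB
    dsimp only at hA hB
    split_ifs at hA hB
    · exact (ENNReal.ofReal_le_ofReal hlam).trans_lt (hsep _ A hA B hB hAB)
    · exact hA.elim
  · intro i A hA
    dsimp only at hA
    split_ifs at hA
    · exact (hdiam _ A hA).trans (ENNReal.ofReal_le_ofReal hD)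
    · exact hA.elim
  · intro x
    obtain ⟨i, A, hA, hx⟩ := hcov x
    exact ⟨Fin.castLE (by omega) i, A, by simpa [i.is_le] using hA, hx⟩

lemma fdim_le_natCast_iff {X : Type*} [PseudoMetricSpace X] {c lam k : ℕ} :
    fdim X c lam ≤ k ↔ diLE X lam (c * lam) k := by
  refine ⟨fun h => ?_, fun h => iInf₂_le k h⟩
  by_contra hk
  have hlt : ∀ n ∈ {n : ℕ | diLE X lam (c * lam) n}, ((k + 1 : ℕ) : ℕ∞) ≤ n := by
    intro n hn
    by_contra! hnk
    exact hk (hn.mono le_rfl le_rfl (Nat.le_of_lt_succ (by exact_mod_cast hnk)))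
  have := (le_iInf₂ hlt).trans h
  norm_cast at this
  omega

lemma ulim_eq_natCast_of_eventually_eq {ω : Ultrafilter ℕ} {f : ℕ → ℕ∞} {v : ℕ}
    (h : ∀ᶠ m in ω, f m = v) : ulim ω f = v := by
  have hex : ∃ v : ℕ, {m | f m = (v : ℕ∞)} ∈ ω := ⟨v, h⟩
  rw [ulim, dif_pos hex]
  obtain ⟨m, hm, hmv⟩ := (Eventually.and (Classical.choose_spec hex) h).exists
  exact hm.symm.trans hmv

lemma ulim_le_natCast_iff {ω : Ultrafilter ℕ} {f : ℕ → ℕ∞} {k : ℕ} :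
    ulim ω f ≤ k ↔ ∀ᶠ m in ω, f m ≤ k := by
  constructor
  · intro h
    rw [ulim] at h
    split_ifs at h with hv
    · filter_upwards [Classical.choose_spec hv] with m hm
      exact hm ▸ h
    · exact absurd h (by simp)
  · intro h
    simp only [ENat.le_natCast_iff] at h
    obtain ⟨v, hvk, hv⟩ := (Ultrafilter.eventually_exists_mem_iff (Set.finite_Iic k)).1
      (h.mono fun m ⟨v, hv, hvk⟩ => ⟨v, hvk, hv⟩)
    rw [ulim_eq_natCast_of_eventually_eq hv]
    exact_mod_cast hvk

lemma lasOmega_le_natCast_iff {X : Type*} [PseudoMetricSpace X] {ω : Ultrafilter ℕ} {k : ℕ} :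
    lasOmega X ω ≤ k ↔ ∃ c : ℕ, ∀ᶠ m : ℕ in ω, diLE X m (c * m) k := by
  simp only [← fdim_le_natCast_iff, ← ulim_le_natCast_iff]
  refine ⟨fun h => ?_, fun ⟨c, hc⟩ => (iInf_le _ c).trans hc⟩
  obtain ⟨c, hc⟩ := ciInf_mem fun c : ℕ => ulim ω fun lam => fdim X c lam
  exact ⟨c, hc.trans_le h⟩

theorem Filter.exists_mem_of_forall_ultrafilter_le {α ι : Type*} [Nonempty ι] {f : Filter α}
    {s : ι → Set α} (hs : Directed (· ⊆ ·) s)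
    (h : ∀ ω : Ultrafilter α, ↑ω ≤ f → ∃ i, s i ∈ ω) : ∃ i, s i ∈ f := by
  have hcompact : IsCompact {ω : Ultrafilter α | ↑ω ≤ f} := by
    have : {ω : Ultrafilter α | ↑ω ≤ f} = ⋂ t ∈ f, {ω | t ∈ ω} := by
      ext
      simp [Filter.le_def]
    exact this ▸ (isClosed_biInter fun t _ => ultrafilter_isClosed_basic t).isCompact
  obtain ⟨i, hi⟩ := hcompact.elim_directed_cover (fun i => {ω | s i ∈ ω})
    (fun i => ultrafilter_isOpen_basic _) (fun ω hω => mem_iUnion.2 (h ω hω))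
    fun i j => (hs i j).imp fun _ hk =>
      ⟨fun ω hω => ω.mem_of_superset hω hk.1, fun ω hω => ω.mem_of_superset hω hk.2⟩
  exact ⟨i, Filter.mem_iff_ultrafilter.2 hi⟩

lemma ANasLE_of_eventually_diLE {X : Type*} [PseudoMetricSpace X] {k c : ℕ}
    (h : ∀ᶠ m : ℕ in atTop, diLE X m (c * m) k) : ANasLE X k := by
  obtain ⟨N, hN⟩ := eventually_atTop.1 h
  refine ⟨2 * c + 1, by positivity, max N 1, fun lam hlam => ?_⟩
  have hlam1 : 1 < lam := (le_max_right _ _).trans_lt hlam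
  have hNm : N ≤ ⌈lam⌉₊ := by
    exact_mod_cast ((le_max_left _ _).trans_lt hlam).le.trans (Nat.le_ceil lam)
  refine (hN _ hNm).mono (Nat.le_ceil lam) ?_ le_rfl
  have hceil : (⌈lam⌉₊ : ℝ) < lam + 1 := Nat.ceil_lt_add_one (by positivity)
  have hc : (0 : ℝ) ≤ c := c.cast_nonneg
  nlinarith

lemma lasOmega_le_of_ANasLE {X : Type*} [PseudoMetricSpace X] {n : ℕ} (h : ANasLE X n)
    {ω : Ultrafilter ℕ} (hω : (ω : Filter ℕ) ≤ cofinite) : lasOmega X ω ≤ n := by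
  obtain ⟨c, -, r₀, hr⟩ := h
  refine lasOmega_le_natCast_iff.2 ⟨⌈c⌉₊, hω ?_⟩
  rw [Nat.cofinite_eq_atTop]
  filter_upwards [eventually_gt_atTop ⌈r₀⌉₊] with m hm
  exact (hr m ((Nat.le_ceil r₀).trans_lt (by exact_mod_cast hm))).mono le_rfl
    (by gcongr; exact Nat.le_ceil c) le_rfl

lemma ANasLE_of_forall_lasOmega_le {X : Type*} [PseudoMetricSpace X] {k : ℕ}
    (h : ∀ ω : Ultrafilter ℕ, (ω : Filter ℕ) ≤ cofinite → lasOmega X ω ≤ k) :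
    ANasLE X k := by
  have hmono : Monotone fun c : ℕ => {m : ℕ | diLE X m (c * m) k} :=
    fun c c' hcc' m hm => hm.mono le_rfl (by gcongr) le_rfl
  obtain ⟨c, hc⟩ := exists_mem_of_forall_ultrafilter_le hmono.directed_le
    fun ω hω => lasOmega_le_natCast_iff.1 (h ω hω)
  exact ANasLE_of_eventually_diLE (c := c) (Nat.cofinite_eq_atTop ▸ hc)

/-- if `las_ω X ≤ k` for every non-principal `ω` then `ANas X ≤ k`;
hence `ANas X = sup { las_ω X : ω ∈ ℕ* }`. -/
theorem stmt15 (X : Type*) [MetricSpace X] (k : ℕ) :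
    ((∀ ω : Ultrafilter ℕ, (↑ω : Filter ℕ) ≤ Filter.cofinite → lasOmega X ω ≤ (k : ℕ∞)) →
      ANasLE X k) ∧
    ANasDim X =
      ⨆ ω : {ω : Ultrafilter ℕ // (↑ω : Filter ℕ) ≤ Filter.cofinite}, lasOmega X ω.1 := by
  refine ⟨ANasLE_of_forall_lasOmega_le, le_antisymm ?_ ?_⟩
  · refine WithTop.forall_le_coe_iff_le.1 fun n hn => iInf₂_le n ?_
    exact ANasLE_of_forall_lasOmega_le fun ω hω => (le_iSup_of_le ⟨ω, hω⟩ le_rfl).trans hn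
  · exact iSup_le fun ω => le_iInf₂ fun n hn => lasOmega_le_of_ANasLE hn ω.2
end
end
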